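/- arXiv:1511.05089 — 5 statements merged into one kernel-verified Lean document; each statement's English description precedes it below -/
import Mathlib

section
/- Let k be a field, ψ ∈ k, and let f = x₀³ + x₁³ + x₂³ − 3ψx₀x₁x₂ in k[x₀,x₁,x₂]. Let a₀, a₁, a₂ ∈ k satisfy a₀³ + a₁³ + a₂³ = 3ψa₀a₁a₂ (i.e., the point [a₀ : a₁ : a₂] lies on the Hesse cubic curve f = 0) and a₀a₁a₂ ≠ 0. Let A be the Moore matrix A = [[a₀x₀, a₂x₂, a₁x₁], [a₂x₁, a₁x₀, a₀x₂], [a₁x₂, a₀x₁, a₂x₀]] and let B = (a₀a₁a₂)⁻¹ · [[a₁a₂x₀² − a₀²x₁x₂, a₀a₁x₁² − a₂²x₀x₂, a₀a₂x₂² − a₁²x₀x₁], [a₀a₁x₂² − a₂²x₀x₁, a₀a₂x₀² − a₁²x₁x₂, a₁a₂x₁² − a₀²x₀x₂], [a₀a₂x₁² − a₁²x₀x₂, a₁a₂x₂² − a₀²x₀x₁, a₀a₁x₀² − a₂²x₁x₂]]. Then A·B = f·Id₃ and B·A = f·Id₃, i.e., the pair {A, B} is a matrix factorization of the Hesse cubic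 f. -/
open MvPolynomial Matrix

set_option maxHeartbeats 4000000 in
/-- The Moore matrix `A` together with `B = (a₀a₁a₂)⁻¹ · adj(A)` (written out explicitly)
form a matrix factorization of the Hesse cubic, provided `[a₀ : a₁ : a₂]` is a point of the
Hesse cubic curve with `a₀a₁a₂ ≠ 0`. -/
theorem moore_matrix_factorization {k : Type*} [Field k] (ψ a₀ a₁ a₂ : k)
    (ha : a₀ ^ 3 + a₁ ^ 3 + a₂ ^ 3 = 3 * ψ * (a₀ * a₁ * a₂))
    (hne : a₀ * a₁ * a₂ ≠ 0)
    (f : MvPolynomial (Fin 3) k)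
    (hf : f = X 0 ^ 3 + X 1 ^ 3 + X 2 ^ 3 - C (3 * ψ) * (X 0 * X 1 * X 2))
    (A B : Matrix (Fin 3) (Fin 3) (MvPolynomial (Fin 3) k))
    (hA : A = !![C a₀ * X 0, C a₂ * X 2, C a₁ * X 1;
                 C a₂ * X 1, C a₁ * X 0, C a₀ * X 2;
                 C a₁ * X 2, C a₀ * X 1, C a₂ * X 0])
    (hB : B = (C ((a₀ * a₁ * a₂)⁻¹) : MvPolynomial (Fin 3) k) •
      !![C (a₁ * a₂) * X 0 ^ 2 - C (a₀ ^ 2) * (X 1 * X 2),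
         C (a₀ * a₁) * X 1 ^ 2 - C (a₂ ^ 2) * (X 0 * X 2),
         C (a₀ * a₂) * X 2 ^ 2 - C (a₁ ^ 2) * (X 0 * X 1);
         C (a₀ * a₁) * X 2 ^ 2 - C (a₂ ^ 2) * (X 0 * X 1),
         C (a₀ * a₂) * X 0 ^ 2 - C (a₁ ^ 2) * (X 1 * X 2),
         C (a₁ * a₂) * X 1 ^ 2 - C (a₀ ^ 2) * (X 0 * X 2);
         C (a₀ * a₂) * X 1 ^ 2 - C (a₁ ^ 2) * (X 0 * X 2),
         C (a₁ * a₂) * X 2 ^ 2 - C (a₀ ^ 2) * (X 0 * X 1),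
         C (a₀ * a₁) * X 0 ^ 2 - C (a₂ ^ 2) * (X 1 * X 2)]) :
    A * B = f • (1 : Matrix (Fin 3) (Fin 3) (MvPolynomial (Fin 3) k)) ∧
    B * A = f • (1 : Matrix (Fin 3) (Fin 3) (MvPolynomial (Fin 3) k)) := by
  have hC : (C a₀ * C a₁ * C a₂ : MvPolynomial (Fin 3) k) * C ((a₀ * a₁ * a₂)⁻¹) = 1 := by
    rw [← C_mul, ← C_mul, ← C_mul, mul_inv_cancel₀ hne, C_1]
  have hCa : (C a₀ ^ 3 + C a₁ ^ 3 + C a₂ ^ 3 : MvPolynomial (Fin 3) k)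
      = 3 * C ψ * (C a₀ * C a₁ * C a₂) := by
    rw [← C_pow, ← C_pow, ← C_pow, ← C_add, ← C_add, ha]
    simp only [C_mul]
    rw [map_ofNat]
  have h2 : (⟨2, by omega⟩ : Fin 3) = 2 := rfl
  subst hf hA hB
  constructor <;> (apply Matrix.ext; intro i j; fin_cases i <;> fin_cases j) <;>
    simp only [Matrix.of_apply, h2, Fin.mk_zero, Fin.mk_one, Matrix.mul_apply, Fin.sum_univ_three,
      Matrix.smul_apply, Matrix.one_apply, Matrix.cons_val', Matrix.cons_val_zero,
      Matrix.cons_val_one, Matrix.head_cons, Matrix.empty_val', Matrix.cons_val_fin_one,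
      Matrix.cons_val_two, Matrix.tail_cons, Matrix.head_fin_const, smul_eq_mul,
      C_mul, C_pow, Fin.isValue, if_true, if_false, Ne, Fin.reduceEq, not_false_eq_true,
      mul_one, mul_zero, one_ne_zero, map_ofNat] <;>
  first
    | linear_combination (X (0:Fin 3) ^ 3 + X 1 ^ 3 + X 2 ^ 3
        - 3 * C ψ * (X 0 * X 1 * X 2)) * hC
        - C ((a₀ * a₁ * a₂)⁻¹) * (X (0:Fin 3) * X 1 * X 2) * hCa
    | ring1
end

section
/- Let k be a commutative ring and a₀, a₁, a₂ ∈ k. Let A be the 2×2 matrix over k[x₀,x₁,x₂] given by A = [[a₁x₂ − a₂x₁, a₀x₁ − a₁x₀], [a₀a₂x₀² + a₀²x₀x₂ − a₁²x₁x₂ − a₂²x₂², a₂²x₀x₂ + a₀a₂x₂² − a₀²x₀² − a₀a₁x₁²]]. Then det(A) = a₀a₁a₂(x₀³ + x₁³ + x₂³) − (a₀³ + a₁³ + a₂³)x₀x₁x₂. -/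
open MvPolynomial Matrix

/-- The determinant of the 2×2 matrix associated to the skyscraper sheaf of degree one at
`[a₀ : a₁ : a₂]` equals `a₀a₁a₂(x₀³ + x₁³ + x₂³) − (a₀³ + a₁³ + a₂³)x₀x₁x₂`. -/
theorem skyscraper_matrix_det {k : Type*} [CommRing k] (a₀ a₁ a₂ : k)
    (A : Matrix (Fin 2) (Fin 2) (MvPolynomial (Fin 3) k))
    (hA : A = !![C a₁ * X 2 - C a₂ * X 1, C a₀ * X 1 - C a₁ * X 0;
                 C (a₀ * a₂) * X 0 ^ 2 + C (a₀ ^ 2) * (X 0 * X 2)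
                   - C (a₁ ^ 2) * (X 1 * X 2) - C (a₂ ^ 2) * X 2 ^ 2,
                 C (a₂ ^ 2) * (X 0 * X 2) + C (a₀ * a₂) * X 2 ^ 2
                   - C (a₀ ^ 2) * X 0 ^ 2 - C (a₀ * a₁) * X 1 ^ 2]) :
    A.det = C (a₀ * a₁ * a₂) * (X 0 ^ 3 + X 1 ^ 3 + X 2 ^ 3)
      - C (a₀ ^ 3 + a₁ ^ 3 + a₂ ^ 3) * (X 0 * X 1 * X 2) := by
  subst hA
  simp only [det_fin_two_of, C_mul, C_add, C_pow]
  ring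
end

section
/- Let k be a field, ψ ∈ k, and let f = x₀³ + x₁³ + x₂³ − 3ψx₀x₁x₂ in k[x₀,x₁,x₂]. Let a₀, a₁, a₂ ∈ k satisfy a₀³ + a₁³ + a₂³ = 3ψa₀a₁a₂ (i.e., the point [a₀ : a₁ : a₂] lies on the Hesse cubic curve f = 0) and a₀a₁a₂ ≠ 0. Let A = [[a₁x₂ − a₂x₁, a₀x₁ − a₁x₀], [a₀a₂x₀² + a₀²x₀x₂ − a₁²x₁x₂ − a₂²x₂², a₂²x₀x₂ + a₀a₂x₂² − a₀²x₀² − a₀a₁x₁²]] and B = (a₀a₁a₂)⁻¹ · adj(A). Then A·B = f·Id₂ and B·A = f·Id₂, i.e., the pair {A, B} is a matrix factorization of the Hesse cubic f. -/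
open MvPolynomial Matrix

/-- The 2×2 matrix `A` associated to the skyscraper sheaf of degree one at a point
`[a₀ : a₁ : a₂]` of the Hesse cubic with `a₀a₁a₂ ≠ 0`, together with
`B = (a₀a₁a₂)⁻¹ · adj(A)`, form a matrix factorization of the Hesse cubic. -/
theorem skyscraper_matrix_factorization {k : Type*} [Field k] (ψ a₀ a₁ a₂ : k)
    (ha : a₀ ^ 3 + a₁ ^ 3 + a₂ ^ 3 = 3 * ψ * (a₀ * a₁ * a₂))
    (hne : a₀ * a₁ * a₂ ≠ 0)
    (f : MvPolynomial (Fin 3) k)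
    (hf : f = X 0 ^ 3 + X 1 ^ 3 + X 2 ^ 3 - C (3 * ψ) * (X 0 * X 1 * X 2))
    (A B : Matrix (Fin 2) (Fin 2) (MvPolynomial (Fin 3) k))
    (hA : A = !![C a₁ * X 2 - C a₂ * X 1, C a₀ * X 1 - C a₁ * X 0;
                 C (a₀ * a₂) * X 0 ^ 2 + C (a₀ ^ 2) * (X 0 * X 2)
                   - C (a₁ ^ 2) * (X 1 * X 2) - C (a₂ ^ 2) * X 2 ^ 2,
                 C (a₂ ^ 2) * (X 0 * X 2) + C (a₀ * a₂) * X 2 ^ 2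
                   - C (a₀ ^ 2) * X 0 ^ 2 - C (a₀ * a₁) * X 1 ^ 2])
    (hB : B = (C ((a₀ * a₁ * a₂)⁻¹) : MvPolynomial (Fin 3) k) • A.adjugate) :
    A * B = f • (1 : Matrix (Fin 2) (Fin 2) (MvPolynomial (Fin 3) k)) ∧
    B * A = f • (1 : Matrix (Fin 2) (Fin 2) (MvPolynomial (Fin 3) k)) := by
  have hC : (C (a₀ ^ 3 + a₁ ^ 3 + a₂ ^ 3) : MvPolynomial (Fin 3) k)
      = C (3 * ψ * (a₀ * a₁ * a₂)) := by rw [ha]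
  simp only [map_add, _root_.map_mul, map_pow, map_ofNat] at hC
  have hdet : A.det = C (a₀ * a₁ * a₂) * f := by
    subst hA hf
    rw [Matrix.det_fin_two_of]
    simp only [_root_.map_mul, map_pow, map_ofNat]
    linear_combination (-(X 0 * X 1 * X 2 : MvPolynomial (Fin 3) k)) * hC
  have hCne : (C (a₀ * a₁ * a₂) : MvPolynomial (Fin 3) k) ≠ 0 := by
    simpa using hne
  have key : ∀ M : Matrix (Fin 2) (Fin 2) (MvPolynomial (Fin 3) k),
      (C ((a₀ * a₁ * a₂)⁻¹) : MvPolynomial (Fin 3) k) • (A.det • M) = f • M := by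
    intro M
    rw [hdet, smul_smul, ← mul_assoc, ← C_mul, inv_mul_cancel₀ hne, C_1, one_mul]
  constructor
  · rw [hB, Matrix.mul_smul, Matrix.mul_adjugate, key]
  · rw [hB, Matrix.smul_mul, Matrix.adjugate_mul, key]
end

section
/- Let M be the 2×2 integer matrix M = [[1, −1], [3, −2]] acting on column vectors in ℤ². Then for every nonzero vector v = (r, d) ∈ ℤ², there exists exactly one j ∈ {0, 1, 2} such that the vector M^j·v = (r', d') satisfies r' > 0 and 0 ≤ d' < 3r'. That is, the region {(r, d) ∈ ℤ² : r > 0, 0 ≤ d < 3r} is a fundamental domain for the action on ℤ² \ {0} of the cyclic group of order 3 generated by M. -/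
open Matrix

/-- `{(r, d) : r > 0, 0 ≤ d < 3r}` is a fundamental domain for the action of the cyclic
group of order 3 generated by `M = [[1, −1], [3, −2]]` on `ℤ² \ {0}`. -/
theorem fundamental_domain_order_three (M : Matrix (Fin 2) (Fin 2) ℤ)
    (hM : M = !![1, -1; 3, -2]) (v : Fin 2 → ℤ) (hv : v ≠ 0) :
    ∃! j : Fin 3,
      0 < (M ^ (j : ℕ)).mulVec v 0 ∧
      0 ≤ (M ^ (j : ℕ)).mulVec v 1 ∧
      (M ^ (j : ℕ)).mulVec v 1 < 3 * (M ^ (j : ℕ)).mulVec v 0 := by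
  subst hM
  have hv' : v 0 ≠ 0 ∨ v 1 ≠ 0 := by
    by_contra h
    push_neg at h
    exact hv (funext fun i => by fin_cases i <;> simp [h.1, h.2])
  have e2 : (!![1,-1;3,-2] : Matrix (Fin 2) (Fin 2) ℤ) ^ (2:ℕ) = !![-2,1;-3,1] := by
    rw [pow_two]; norm_num [Matrix.mul_fin_two]
  have q0 : ∀ i, ((!![1,-1;3,-2] : Matrix (Fin 2) (Fin 2) ℤ) ^ (0:ℕ)).mulVec v i = v i := by
    intro i; simp [Matrix.one_mulVec]
  have q1a : ((!![1,-1;3,-2] : Matrix (Fin 2) (Fin 2) ℤ) ^ (1:ℕ)).mulVec v 0 = v 0 - v 1 := by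
    simp [Matrix.mulVec, dotProduct, Fin.sum_univ_two]; ring
  have q1b : ((!![1,-1;3,-2] : Matrix (Fin 2) (Fin 2) ℤ) ^ (1:ℕ)).mulVec v 1 = 3 * v 0 - 2 * v 1 := by
    simp [Matrix.mulVec, dotProduct, Fin.sum_univ_two]; ring
  have q2a : ((!![1,-1;3,-2] : Matrix (Fin 2) (Fin 2) ℤ) ^ (2:ℕ)).mulVec v 0 = v 1 - 2 * v 0 := by
    rw [e2]; simp [Matrix.mulVec, dotProduct, Fin.sum_univ_two]; ring
  have q2b : ((!![1,-1;3,-2] : Matrix (Fin 2) (Fin 2) ℤ) ^ (2:ℕ)).mulVec v 1 = v 1 - 3 * v 0 := by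
    rw [e2]; simp [Matrix.mulVec, dotProduct, Fin.sum_univ_two]; ring
  by_cases hA : 0 < v 0 ∧ 0 ≤ v 1 ∧ v 1 < 3 * v 0
  · refine ⟨0, by simp only [Fin.isValue, Fin.val_zero, q0]; exact hA, ?_⟩
    intro j hj
    fin_cases j
    · rfl
    · rw [show ((⟨1,by norm_num⟩:Fin 3):ℕ) = 1 from rfl, q1a, q1b] at hj; omega
    · rw [show ((⟨2,by norm_num⟩:Fin 3):ℕ) = 2 from rfl, q2a, q2b] at hj; omega
  · by_cases hB : 0 < v 0 - v 1 ∧ 0 ≤ 3 * v 0 - 2 * v 1 ∧ 3 * v 0 - 2 * v 1 < 3 * (v 0 - v 1)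
    · refine ⟨1, by simp only [Fin.isValue, Fin.val_one, q1a, q1b]; exact hB, ?_⟩
      intro j hj
      fin_cases j
      · rw [show ((⟨0,by norm_num⟩:Fin 3):ℕ) = 0 from rfl, q0, q0] at hj; omega
      · rfl
      · rw [show ((⟨2,by norm_num⟩:Fin 3):ℕ) = 2 from rfl, q2a, q2b] at hj; omega
    · have hC : 0 < v 1 - 2 * v 0 ∧ 0 ≤ v 1 - 3 * v 0 ∧ v 1 - 3 * v 0 < 3 * (v 1 - 2 * v 0) := by
        omega
      refine ⟨2, by simp only [Fin.isValue, show ((2:Fin 3):ℕ)=2 from rfl, q2a, q2b]; exact hC, ?_⟩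
      intro j hj
      fin_cases j
      · rw [show ((⟨0,by norm_num⟩:Fin 3):ℕ) = 0 from rfl, q0, q0] at hj; omega
      · rw [show ((⟨1,by norm_num⟩:Fin 3):ℕ) = 1 from rfl, q1a, q1b] at hj; omega
      · rfl
end

section
/- Let M be the 2×2 integer matrix M = [[1, −1], [3, −2]] acting on column vectors in ℤ². Then for every nonzero vector v = (r, d) ∈ ℤ², there exists exactly one j ∈ {0, 1, 2, 3, 4, 5} such that the vector (−M)^j·v = (r', d') satisfies r' > 0 and 3r' > 2d' ≥ 0. That is, the region {(r, d) ∈ ℤ² : r > 0, 3r > 2d ≥ 0} is a fundamental domain for the action on ℤ² \ {0} of the cyclic group of order 6 generated by −M. -/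
open Matrix

private lemma fdos_pow2 : (!![-1, 1; -3, 2] : Matrix (Fin 2) (Fin 2) ℤ) ^ 2 = !![-2, 1; -3, 1] := by
  rw [pow_two, Matrix.mul_fin_two]; norm_num

private lemma fdos_pow3 : (!![-1, 1; -3, 2] : Matrix (Fin 2) (Fin 2) ℤ) ^ 3 = !![-1, 0; 0, -1] := by
  rw [pow_succ, fdos_pow2, Matrix.mul_fin_two]; norm_num

private lemma fdos_pow4 : (!![-1, 1; -3, 2] : Matrix (Fin 2) (Fin 2) ℤ) ^ 4 = !![1, -1; 3, -2] := by
  rw [pow_succ, fdos_pow3, Matrix.mul_fin_two]; norm_num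

private lemma fdos_pow5 : (!![-1, 1; -3, 2] : Matrix (Fin 2) (Fin 2) ℤ) ^ 5 = !![2, -1; 3, -1] := by
  rw [pow_succ, fdos_pow4, Matrix.mul_fin_two]; norm_num

private lemma fdos_k0 (r d : ℤ) :
    (0 < ((!![-1, 1; -3, 2] : Matrix (Fin 2) (Fin 2) ℤ) ^ 0).mulVec ![r, d] 0 ∧
     0 ≤ 2 * ((!![-1, 1; -3, 2] : Matrix (Fin 2) (Fin 2) ℤ) ^ 0).mulVec ![r, d] 1 ∧
     2 * ((!![-1, 1; -3, 2] : Matrix (Fin 2) (Fin 2) ℤ) ^ 0).mulVec ![r, d] 1 <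
       3 * ((!![-1, 1; -3, 2] : Matrix (Fin 2) (Fin 2) ℤ) ^ 0).mulVec ![r, d] 0) ↔
    (0 < r ∧ 0 ≤ 2 * d ∧ 2 * d < 3 * r) := by
  rw [pow_zero]; simp [Matrix.mulVec, dotProduct, Fin.sum_univ_two]

private lemma fdos_k1 (r d : ℤ) :
    (0 < ((!![-1, 1; -3, 2] : Matrix (Fin 2) (Fin 2) ℤ) ^ 1).mulVec ![r, d] 0 ∧
     0 ≤ 2 * ((!![-1, 1; -3, 2] : Matrix (Fin 2) (Fin 2) ℤ) ^ 1).mulVec ![r, d] 1 ∧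
     2 * ((!![-1, 1; -3, 2] : Matrix (Fin 2) (Fin 2) ℤ) ^ 1).mulVec ![r, d] 1 <
       3 * ((!![-1, 1; -3, 2] : Matrix (Fin 2) (Fin 2) ℤ) ^ 1).mulVec ![r, d] 0) ↔
    (r < d ∧ 3 * r ≤ 2 * d ∧ 2 * (2 * d - 3 * r) < 3 * (d - r)) := by
  rw [pow_one]; simp [Matrix.mulVec, dotProduct, Fin.sum_univ_two]; omega

private lemma fdos_k2 (r d : ℤ) :
    (0 < ((!![-1, 1; -3, 2] : Matrix (Fin 2) (Fin 2) ℤ) ^ 2).mulVec ![r, d] 0 ∧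
     0 ≤ 2 * ((!![-1, 1; -3, 2] : Matrix (Fin 2) (Fin 2) ℤ) ^ 2).mulVec ![r, d] 1 ∧
     2 * ((!![-1, 1; -3, 2] : Matrix (Fin 2) (Fin 2) ℤ) ^ 2).mulVec ![r, d] 1 <
       3 * ((!![-1, 1; -3, 2] : Matrix (Fin 2) (Fin 2) ℤ) ^ 2).mulVec ![r, d] 0) ↔
    (2 * r < d ∧ 3 * r ≤ d ∧ 2 * (d - 3 * r) < 3 * (d - 2 * r)) := by
  rw [fdos_pow2]; simp [Matrix.mulVec, dotProduct, Fin.sum_univ_two]; omega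

private lemma fdos_k3 (r d : ℤ) :
    (0 < ((!![-1, 1; -3, 2] : Matrix (Fin 2) (Fin 2) ℤ) ^ 3).mulVec ![r, d] 0 ∧
     0 ≤ 2 * ((!![-1, 1; -3, 2] : Matrix (Fin 2) (Fin 2) ℤ) ^ 3).mulVec ![r, d] 1 ∧
     2 * ((!![-1, 1; -3, 2] : Matrix (Fin 2) (Fin 2) ℤ) ^ 3).mulVec ![r, d] 1 <
       3 * ((!![-1, 1; -3, 2] : Matrix (Fin 2) (Fin 2) ℤ) ^ 3).mulVec ![r, d] 0) ↔
    (r < 0 ∧ d ≤ 0 ∧ 3 * r < 2 * d) := by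
  rw [fdos_pow3]; simp [Matrix.mulVec, dotProduct, Fin.sum_univ_two]; omega

private lemma fdos_k4 (r d : ℤ) :
    (0 < ((!![-1, 1; -3, 2] : Matrix (Fin 2) (Fin 2) ℤ) ^ 4).mulVec ![r, d] 0 ∧
     0 ≤ 2 * ((!![-1, 1; -3, 2] : Matrix (Fin 2) (Fin 2) ℤ) ^ 4).mulVec ![r, d] 1 ∧
     2 * ((!![-1, 1; -3, 2] : Matrix (Fin 2) (Fin 2) ℤ) ^ 4).mulVec ![r, d] 1 <
       3 * ((!![-1, 1; -3, 2] : Matrix (Fin 2) (Fin 2) ℤ) ^ 4).mulVec ![r, d] 0) ↔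
    (d < r ∧ 2 * d ≤ 3 * r ∧ 2 * (3 * r - 2 * d) < 3 * (r - d)) := by
  rw [fdos_pow4]; simp [Matrix.mulVec, dotProduct, Fin.sum_univ_two]; omega

private lemma fdos_k5 (r d : ℤ) :
    (0 < ((!![-1, 1; -3, 2] : Matrix (Fin 2) (Fin 2) ℤ) ^ 5).mulVec ![r, d] 0 ∧
     0 ≤ 2 * ((!![-1, 1; -3, 2] : Matrix (Fin 2) (Fin 2) ℤ) ^ 5).mulVec ![r, d] 1 ∧
     2 * ((!![-1, 1; -3, 2] : Matrix (Fin 2) (Fin 2) ℤ) ^ 5).mulVec ![r, d] 1 <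
       3 * ((!![-1, 1; -3, 2] : Matrix (Fin 2) (Fin 2) ℤ) ^ 5).mulVec ![r, d] 0) ↔
    (d < 2 * r ∧ d ≤ 3 * r ∧ 2 * (3 * r - d) < 3 * (2 * r - d)) := by
  rw [fdos_pow5]; simp [Matrix.mulVec, dotProduct, Fin.sum_univ_two]; omega

/-- `{(r, d) : r > 0, 3r > 2d ≥ 0}` is a fundamental domain for the action of the cyclic
group of order 6 generated by `−M`, where `M = [[1, −1], [3, −2]]`, on `ℤ² \ {0}`. -/
theorem fundamental_domain_order_six (M : Matrix (Fin 2) (Fin 2) ℤ)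
    (hM : M = !![1, -1; 3, -2]) (v : Fin 2 → ℤ) (hv : v ≠ 0) :
    ∃! j : Fin 6,
      0 < ((-M) ^ (j : ℕ)).mulVec v 0 ∧
      0 ≤ 2 * ((-M) ^ (j : ℕ)).mulVec v 1 ∧
      2 * ((-M) ^ (j : ℕ)).mulVec v 1 < 3 * ((-M) ^ (j : ℕ)).mulVec v 0 := by
  subst hM
  obtain ⟨r, d, rfl⟩ : ∃ r d, v = ![r, d] :=
    ⟨v 0, v 1, by funext i; fin_cases i <;> simp⟩
  have hv' : r ≠ 0 ∨ d ≠ 0 := by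
    by_contra h
    push_neg at h
    exact hv (by rw [h.1, h.2]; funext i; fin_cases i <;> simp)
  clear hv
  have e1 : -(!![1, -1; 3, -2] : Matrix (Fin 2) (Fin 2) ℤ) = !![-1, 1; -3, 2] := by
    ext i j; fin_cases i <;> fin_cases j <;> simp
  rw [e1]
  have hex :
      (0 < r ∧ 0 ≤ 2 * d ∧ 2 * d < 3 * r) ∨
      (r < d ∧ 3 * r ≤ 2 * d ∧ 2 * (2 * d - 3 * r) < 3 * (d - r)) ∨
      (2 * r < d ∧ 3 * r ≤ d ∧ 2 * (d - 3 * r) < 3 * (d - 2 * r)) ∨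
      (r < 0 ∧ d ≤ 0 ∧ 3 * r < 2 * d) ∨
      (d < r ∧ 2 * d ≤ 3 * r ∧ 2 * (3 * r - 2 * d) < 3 * (r - d)) ∨
      (d < 2 * r ∧ d ≤ 3 * r ∧ 2 * (3 * r - d) < 3 * (2 * r - d)) := by
    omega
  rcases hex with h | h | h | h | h | h
  · refine ⟨0, (fdos_k0 r d).2 h, fun y hy => ?_⟩
    fin_cases y
    · rfl
    · exact absurd ((fdos_k1 r d).1 hy) (by omega)
    · exact absurd ((fdos_k2 r d).1 hy) (by omega)
    · exact absurd ((fdos_k3 r d).1 hy) (by omega)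
    · exact absurd ((fdos_k4 r d).1 hy) (by omega)
    · exact absurd ((fdos_k5 r d).1 hy) (by omega)
  · refine ⟨1, (fdos_k1 r d).2 h, fun y hy => ?_⟩
    fin_cases y
    · exact absurd ((fdos_k0 r d).1 hy) (by omega)
    · rfl
    · exact absurd ((fdos_k2 r d).1 hy) (by omega)
    · exact absurd ((fdos_k3 r d).1 hy) (by omega)
    · exact absurd ((fdos_k4 r d).1 hy) (by omega)
    · exact absurd ((fdos_k5 r d).1 hy) (by omega)
  · refine ⟨2, (fdos_k2 r d).2 h, fun y hy => ?_⟩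
    fin_cases y
    · exact absurd ((fdos_k0 r d).1 hy) (by omega)
    · exact absurd ((fdos_k1 r d).1 hy) (by omega)
    · rfl
    · exact absurd ((fdos_k3 r d).1 hy) (by omega)
    · exact absurd ((fdos_k4 r d).1 hy) (by omega)
    · exact absurd ((fdos_k5 r d).1 hy) (by omega)
  · refine ⟨3, (fdos_k3 r d).2 h, fun y hy => ?_⟩
    fin_cases y
    · exact absurd ((fdos_k0 r d).1 hy) (by omega)
    · exact absurd ((fdos_k1 r d).1 hy) (by omega)
    · exact absurd ((fdos_k2 r d).1 hy) (by omega)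
    · rfl
    · exact absurd ((fdos_k4 r d).1 hy) (by omega)
    · exact absurd ((fdos_k5 r d).1 hy) (by omega)
  · refine ⟨4, (fdos_k4 r d).2 h, fun y hy => ?_⟩
    fin_cases y
    · exact absurd ((fdos_k0 r d).1 hy) (by omega)
    · exact absurd ((fdos_k1 r d).1 hy) (by omega)
    · exact absurd ((fdos_k2 r d).1 hy) (by omega)
    · exact absurd ((fdos_k3 r d).1 hy) (by omega)
    · rfl
    · exact absurd ((fdos_k5 r d).1 hy) (by omega)
  · refine ⟨5, (fdos_k5 r d).2 h, fun y hy => ?_⟩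
    fin_cases y
    · exact absurd ((fdos_k0 r d).1 hy) (by omega)
    · exact absurd ((fdos_k1 r d).1 hy) (by omega)
    · exact absurd ((fdos_k2 r d).1 hy) (by omega)
    · exact absurd ((fdos_k3 r d).1 hy) (by omega)
    · exact absurd ((fdos_k4 r d).1 hy) (by omega)
    · rfl
end
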